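/- arXiv:2402.06701 — 2 statements merged into one kernel-verified Lean document; each statement's English description precedes it below -/
import Mathlib

section
/- Let m ≥ 1, σ > 0 and let p(x) = (1/(σ√(2π))) · exp(−x²/(2σ²)) be the Gaussian density with standard deviation σ, with cumulative distribution function F. Let u_1,…,u_m and u'_1,…,u'_m be real numbers with |u_i − u'_i| ≤ 1 for every i, and for each i define P_i = ∫_ℝ p(r) · ∏_{j≠i} F(u_i + r − u_j) dr and P'_i = ∫_ℝ p(r) · ∏_{j≠i} F(u'_i + r − u'_j) dr. Let δ be a real number with 0 < δ ≤ m and set ε = 2/σ² + (2/σ)·√(2·log(m/δ)). Then ∑_{i=1}^m max(P_i − e^ε · P'_i, 0) ≤ δ. -/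
/-!
Changing every score by at most 1 changes every margin `u i - u j` by at most 2, so the chance
that `i` wins for `u` with noise `r` is at most its chance for `u'` with noise `r + 2`. For
Gaussian noise of variance `σ²` the density ratio `p r / p (r + 2) = exp ((2r + 2)/σ²)` is at
most `e^ε` as long as `r ≤ t = σ √(2 log (m/δ))`, and the noise exceeds `t` with probability at
most `exp (-t²/(2σ²)) = δ/m`. Hence `P i ≤ e^ε P' i + δ/m`, and summing over the `m` candidates
gives `δ`.
-/

open MeasureTheory Real ProbabilityTheory Set NNReal

theorem MeasureTheory.Integrable.mul_of_nonneg_le_one {p G : ℝ → ℝ} (hp : Integrable p)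
    (hG : Measurable G) (hG0 : ∀ x, 0 ≤ G x) (hG1 : ∀ x, G x ≤ 1) :
    Integrable fun x => p x * G x :=
  hp.mul_bdd hG.aestronglyMeasurable
    (ae_of_all _ fun x => by rw [Real.norm_of_nonneg (hG0 x)]; exact hG1 x)

theorem monotone_setIntegral_Iio {p : ℝ → ℝ} (hp0 : ∀ x, 0 ≤ p x) (hp : Integrable p) :
    Monotone fun u => ∫ t in Iio u, p t := fun _ _ hab =>
  setIntegral_mono_set hp.integrableOn (ae_of_all _ hp0) (Iio_subset_Iio hab).eventuallyLE

theorem integral_mul_comp_add_le {p G : ℝ → ℝ} {c T K : ℝ} (hp0 : ∀ r, 0 ≤ p r)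
    (hp : Integrable p) (hG : Measurable G) (hG0 : ∀ x, 0 ≤ G x) (hG1 : ∀ x, G x ≤ 1)
    (hK0 : 0 ≤ K) (hK : ∀ r ≤ T, p r ≤ K * p (r + c)) :
    ∫ r, p r * G (r + c) ≤ K * (∫ r, p r * G r) + ∫ r in Ioi T, p r := by
  have hshift : Integrable fun r => p r * G (r + c) :=
    hp.mul_of_nonneg_le_one (hG.comp (measurable_add_const c)) (fun _ => hG0 _) fun _ => hG1 _
  have hpG : Integrable fun r => p r * G r := hp.mul_of_nonneg_le_one hG hG0 hG1
  calc ∫ r, p r * G (r + c)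
      = (∫ r in Iic T, p r * G (r + c)) + ∫ r in Ioi T, p r * G (r + c) :=
        (intervalIntegral.integral_Iic_add_Ioi hshift.integrableOn hshift.integrableOn).symm
    _ ≤ (∫ r in Iic T, K * (p (r + c) * G (r + c))) + ∫ r in Ioi T, p r := by
        refine add_le_add (setIntegral_mono_on hshift.integrableOn
          ((hpG.comp_add_right c).const_mul K).integrableOn measurableSet_Iic fun r hr => ?_)
          (setIntegral_mono hshift.integrableOn hp.integrableOn fun r =>
            mul_le_of_le_one_right (hp0 r) (hG1 _))
        rw [← mul_assoc]
        exact mul_le_mul_of_nonneg_right (hK r hr) (hG0 _)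
    _ ≤ K * (∫ r, p r * G r) + ∫ r in Ioi T, p r := by
        rw [integral_const_mul]
        gcongr K * ?_ + _
        exact (setIntegral_le_integral (hpG.comp_add_right c)
          (ae_of_all _ fun r => mul_nonneg (hp0 _) (hG0 _))).trans_eq
          (integral_add_right_eq_self (fun r => p r * G r) c)

theorem gaussianPDFReal_add_eq_exp_mul (μ : ℝ) (v : ℝ≥0) (x a : ℝ) :
    gaussianPDFReal μ v (x + a)
      = exp (-(a * (2 * (x - μ) + a)) / (2 * v)) * gaussianPDFReal μ v x := by
  simp only [gaussianPDFReal]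
  rw [mul_left_comm, ← exp_add]
  congr 2
  ring

theorem gaussianPDFReal_zero_toNNReal_sq {σ : ℝ} (hσ : 0 < σ) (x : ℝ) :
    gaussianPDFReal 0 (σ ^ 2).toNNReal x
      = 1 / (σ * √(2 * π)) * exp (-x ^ 2 / (2 * σ ^ 2)) := by
  rw [gaussianPDFReal, Real.coe_toNNReal _ (sq_nonneg σ), sub_zero, one_div,
    show 2 * π * σ ^ 2 = σ ^ 2 * (2 * π) by ring, Real.sqrt_mul (sq_nonneg σ),
    Real.sqrt_sq hσ.le]

theorem setIntegral_Ioi_gaussianPDFReal_le {v : ℝ≥0} (hv : v ≠ 0) {t : ℝ} (ht : 0 ≤ t) :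
    ∫ x in Ioi t, gaussianPDFReal 0 v x ≤ exp (-t ^ 2 / (2 * v)) := by
  calc ∫ x in Ioi t, gaussianPDFReal 0 v x
      ≤ ∫ x in Ioi t, exp (-t ^ 2 / (2 * v)) * gaussianPDFReal 0 v (x - t) := by
        refine setIntegral_mono_on (integrable_gaussianPDFReal 0 v).integrableOn
          (((integrable_gaussianPDFReal 0 v).comp_sub_right t).const_mul _).integrableOn
          measurableSet_Ioi fun x hx => ?_
        conv_lhs => rw [← sub_add_cancel x t, gaussianPDFReal_add_eq_exp_mul]
        refine mul_le_mul_of_nonneg_right (exp_le_exp.mpr ?_) (gaussianPDFReal_nonneg _ _ _)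
        have : t ^ 2 ≤ t * (2 * (x - t - 0) + t) := by nlinarith [mem_Ioi.mp hx]
        gcongr
    _ ≤ ∫ x, exp (-t ^ 2 / (2 * v)) * gaussianPDFReal 0 v (x - t) :=
        setIntegral_le_integral
          (((integrable_gaussianPDFReal 0 v).comp_sub_right t).const_mul _)
          (ae_of_all _ fun _ => mul_nonneg (exp_pos _).le (gaussianPDFReal_nonneg _ _ _))
    _ = exp (-t ^ 2 / (2 * v)) := by
        rw [integral_const_mul, integral_sub_right_eq_self (gaussianPDFReal 0 v),
          integral_gaussianPDFReal_eq_one 0 hv, mul_one]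

section NoisyMax

variable {ι : Type*} [Fintype ι] [DecidableEq ι] {F : ℝ → ℝ}

/-- With `F` the CDF of the noise, the probability that candidate `i`, whose noisy score is
`u i + r`, beats every other candidate. -/
noncomputable def winProb (F : ℝ → ℝ) (u : ι → ℝ) (i : ι) (r : ℝ) : ℝ :=
  ∏ j ∈ Finset.univ.erase i, F (u i + r - u j)

theorem measurable_winProb (hF : Measurable F) (u : ι → ℝ) (i : ι) :
    Measurable (winProb F u i) :=
  Finset.measurable_prod _ fun _ _ => hF.comp (by fun_prop)

theorem winProb_nonneg (hF0 : ∀ x, 0 ≤ F x) (u : ι → ℝ) (i : ι) (r : ℝ) :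
    0 ≤ winProb F u i r :=
  Finset.prod_nonneg fun _ _ => hF0 _

theorem winProb_le_one (hF0 : ∀ x, 0 ≤ F x) (hF1 : ∀ x, F x ≤ 1) (u : ι → ℝ) (i : ι)
    (r : ℝ) : winProb F u i r ≤ 1 :=
  Finset.prod_le_one (fun _ _ => hF0 _) fun _ _ => hF1 _

theorem winProb_le_winProb_add_two (hF : Monotone F) (hF0 : ∀ x, 0 ≤ F x) {u u' : ι → ℝ}
    (hu : ∀ i, |u i - u' i| ≤ 1) (i : ι) (r : ℝ) :
    winProb F u i r ≤ winProb F u' i (r + 2) :=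
  Finset.prod_le_prod (fun _ _ => hF0 _) fun j _ => hF <| by
    linarith [abs_le.mp (hu i), abs_le.mp (hu j)]

theorem integral_gaussianPDFReal_mul_winProb_le {v : ℝ≥0} (hv : v ≠ 0) (hF : Monotone F)
    (hF0 : ∀ x, 0 ≤ F x) (hF1 : ∀ x, F x ≤ 1) {u u' : ι → ℝ}
    (hu : ∀ i, |u i - u' i| ≤ 1) (i : ι) {t : ℝ} (ht : 0 ≤ t) :
    ∫ r, gaussianPDFReal 0 v r * winProb F u i r
      ≤ exp ((2 * t + 2) / v) * (∫ r, gaussianPDFReal 0 v r * winProb F u' i r)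
        + exp (-t ^ 2 / (2 * v)) := by
  have hv' : (0 : ℝ) < v := by positivity
  have hp := integrable_gaussianPDFReal 0 v
  calc ∫ r, gaussianPDFReal 0 v r * winProb F u i r
      ≤ ∫ r, gaussianPDFReal 0 v r * winProb F u' i (r + 2) := by
        refine integral_mono (hp.mul_of_nonneg_le_one (measurable_winProb hF.measurable u i)
          (winProb_nonneg hF0 u i) (winProb_le_one hF0 hF1 u i))
          (hp.mul_of_nonneg_le_one
            ((measurable_winProb hF.measurable u' i).comp (measurable_add_const 2))
            (fun _ => winProb_nonneg hF0 u' i _) fun _ => winProb_le_one hF0 hF1 u' i _)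
          fun r => ?_
        exact mul_le_mul_of_nonneg_left (winProb_le_winProb_add_two hF hF0 hu i r)
          (gaussianPDFReal_nonneg _ _ _)
    _ ≤ _ := by
        refine integral_mul_comp_add_le (gaussianPDFReal_nonneg 0 v) hp
          (measurable_winProb hF.measurable u' i) (winProb_nonneg hF0 u' i)
          (winProb_le_one hF0 hF1 u' i) (exp_pos _).le (T := t) (fun r hr => ?_)
          |>.trans (add_le_add le_rfl (setIntegral_Ioi_gaussianPDFReal_le hv ht))
        conv_lhs => rw [← add_neg_cancel_right r 2, gaussianPDFReal_add_eq_exp_mul]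
        refine mul_le_mul_of_nonneg_right (exp_le_exp.mpr ?_) (gaussianPDFReal_nonneg _ _ _)
        rw [div_le_div_iff₀ (by positivity) hv']
        nlinarith

end NoisyMax

theorem rnm_gaussian_eps_delta_general
    (m : ℕ) (σ : ℝ) (hσ : 0 < σ)
    (p : ℝ → ℝ)
    (hp : ∀ x, p x = (1 / (σ * Real.sqrt (2 * Real.pi))) * Real.exp (-x ^ 2 / (2 * σ ^ 2)))
    (F : ℝ → ℝ) (hF : ∀ u, F u = ∫ t in Set.Iio u, p t)
    (u u' : Fin m → ℝ) (hu : ∀ i, |u i - u' i| ≤ 1)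
    (P P' : Fin m → ℝ)
    (hP : ∀ i, P i = ∫ r, p r * ∏ j ∈ Finset.univ.erase i, F (u i + r - u j))
    (hP' : ∀ i, P' i = ∫ r, p r * ∏ j ∈ Finset.univ.erase i, F (u' i + r - u' j))
    (δ : ℝ) (hδ_pos : 0 < δ) (hδ_le : δ ≤ m)
    (ε : ℝ) (hε : ε = 2 / σ ^ 2 + (2 / σ) * Real.sqrt (2 * Real.log (m / δ))) :
    ∑ i, max (P i - Real.exp ε * P' i) 0 ≤ δ := by
  set v := (σ ^ 2).toNNReal
  have hv : (v : ℝ) = σ ^ 2 := Real.coe_toNNReal _ (sq_nonneg σ)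
  have hv0 : v ≠ 0 := (Real.toNNReal_pos.mpr (by positivity)).ne'
  obtain rfl : p = gaussianPDFReal 0 v :=
    funext fun x => by rw [hp, gaussianPDFReal_zero_toNNReal_sq hσ]
  have hFmono : Monotone F := funext hF ▸
    monotone_setIntegral_Iio (gaussianPDFReal_nonneg 0 v) (integrable_gaussianPDFReal 0 v)
  have hF0 (x : ℝ) : 0 ≤ F x :=
    hF x ▸ setIntegral_nonneg measurableSet_Iio fun _ _ => gaussianPDFReal_nonneg _ _ _
  have hF1 (x : ℝ) : F x ≤ 1 :=
    hF x ▸ (setIntegral_le_integral (integrable_gaussianPDFReal 0 v)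
      (ae_of_all _ (gaussianPDFReal_nonneg 0 v))).trans_eq (integral_gaussianPDFReal_eq_one 0 hv0)
  have hm : (0 : ℝ) < m := hδ_pos.trans_le hδ_le
  have hlog : 0 ≤ log (m / δ) := log_nonneg ((one_le_div hδ_pos).mpr hδ_le)
  set t := σ * √(2 * log (m / δ))
  have hεt : ε = (2 * t + 2) / v := by rw [hε, hv]; field_simp; ring
  have htail : exp (-t ^ 2 / (2 * v)) = δ / m := by
    rw [hv, mul_pow, sq_sqrt (by positivity),
      show -(σ ^ 2 * (2 * log (m / δ))) / (2 * σ ^ 2) = -log (m / δ) by field_simp,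
      exp_neg, exp_log (by positivity), inv_div]
  have key (i : Fin m) : P i ≤ exp ε * P' i + δ / m := by
    rw [hP, hP', hεt, ← htail]
    exact integral_gaussianPDFReal_mul_winProb_le hv0 hFmono hF0 hF1 hu i (by positivity)
  calc ∑ i, max (P i - exp ε * P' i) 0 ≤ ∑ _i : Fin m, δ / m :=
        Finset.sum_le_sum fun i _ => max_le (by linarith [key i]) (by positivity)
    _ = δ := by
        simp only [Finset.sum_const, Finset.card_univ, Fintype.card_fin, nsmul_eq_mul]
        field_simp

/-- Corollary 3.4: (ε,δ)-DP guarantee for Report Noisy Max with Gaussian noise. -/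
theorem rnm_gaussian_eps_delta
    (m : ℕ) (hm : 1 ≤ m) (σ : ℝ) (hσ : 0 < σ)
    (p : ℝ → ℝ)
    (hp : ∀ x, p x = (1 / (σ * Real.sqrt (2 * Real.pi))) * Real.exp (-x ^ 2 / (2 * σ ^ 2)))
    (F : ℝ → ℝ) (hF : ∀ u, F u = ∫ t in Set.Iio u, p t)
    (u u' : Fin m → ℝ) (hu : ∀ i, |u i - u' i| ≤ 1)
    (P P' : Fin m → ℝ)
    (hP : ∀ i, P i = ∫ r, p r * ∏ j ∈ Finset.univ.erase i, F (u i + r - u j))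
    (hP' : ∀ i, P' i = ∫ r, p r * ∏ j ∈ Finset.univ.erase i, F (u' i + r - u' j))
    (δ : ℝ) (hδ_pos : 0 < δ) (hδ_le : δ ≤ m)
    (ε : ℝ) (hε : ε = 2 / σ ^ 2 + (2 / σ) * Real.sqrt (2 * Real.log (m / δ))) :
    ∑ i, max (P i - Real.exp ε * P' i) 0 ≤ δ :=
  rnm_gaussian_eps_delta_general m σ hσ p hp F hF u u' hu P P' hP hP' δ hδ_pos hδ_le ε hε
end

section
/- Let 𝒴 be a finite linearly ordered set and let Q, Q' : 𝒴 → (0,1] be strictly positive probability mass functions on 𝒴. Let γ ∈ (0,1) and η ∈ (−1,∞), let (w_k)_{k≥1} be the truncated negative binomial distribution D_{η,γ} with mean m and probability generating function φ(z) = ∑_{k≥1} w_k z^k, and define A(y) = φ(Q(≤y)) − φ(Q(<y)) and A'(y) = φ(Q'(≤y)) − φ(Q'(<y)). Let δ : ℝ → [0,∞) be such that for every s ∈ ℝ both ∑_y max(Q(y) − e^s Q'(y), 0) ≤ δ(s) and ∑_y max(Q'(y) − e^s Q(y), 0) ≤ δ(s). Then for every ε ∈ ℝ and every ε₁ ≥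 0: ∑_{y∈𝒴} max(A(y) − e^ε·A'(y), 0) ≤ m · δ(ε̂), where ε̂ = ε − (η+1)·log( e^{ε₁} + ((1−γ)/γ)·δ(ε₁) ). -/
open Finset Real

/-- Cumulative mass `Q(≤ y)` of a pmf on a finite linearly ordered set. -/
noncomputable def cumLE {Y : Type*} [Fintype Y] [LinearOrder Y] (Q : Y → ℝ) (y : Y) : ℝ :=
  ∑ z ∈ Finset.univ.filter (fun z => z ≤ y), Q z

/-- Cumulative mass `Q(< y)` of a pmf on a finite linearly ordered set. -/
noncomputable def cumLT {Y : Type*} [Fintype Y] [LinearOrder Y] (Q : Y → ℝ) (y : Y) : ℝ :=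
  ∑ z ∈ Finset.univ.filter (fun z => z < y), Q z

/-- The pmf of the truncated negative binomial distribution `D_{η,γ}` (supported on `k ≥ 1`). -/
noncomputable def negBinPMF (η γ : ℝ) (k : ℕ) : ℝ :=
  if k = 0 then 0
  else if η = 0 then (1 - γ) ^ k / (k * Real.log (1 / γ))
  else (1 - γ) ^ k / (γ ^ (-η) - 1) * ∏ i ∈ Finset.range k, ((i + η) / (i + 1))

/-- The mean of the truncated negative binomial distribution `D_{η,γ}`. -/
noncomputable def negBinMean (η γ : ℝ) : ℝ :=
  if η = 0 then (1 / γ - 1) / Real.log (1 / γ)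
  else η * (1 - γ) / (γ * (1 - γ ^ η))

/-- The probability generating function of a distribution `w` on ℕ. -/
noncomputable def pgf (w : ℕ → ℝ) (z : ℝ) : ℝ := ∑' k : ℕ, w k * z ^ k
/-!
For `|(1 - γ) t| < 1` the pgf `φ` of `D_{η,γ}` is `((1 - (1 - γ) t)^(-η) - 1) / (γ^(-η) - 1)`
(the binomial series), or `log (1 - (1 - γ) t) / log γ` when `η = 0`; in both cases
`φ' x = m (γ / (1 - (1 - γ) x))^(η + 1)`, which lies in `[0, m]` for `x ≤ 1`.

Fix `y` and move `x = Q(<y) + s Q(y)`, `x' = Q'(<y) + s Q'(y)` together for `s ∈ [0, 1]`.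
The remaining masses are integrals of the same `[0, 1]`-valued test function, so
`1 - x' ≤ e^ε₁ (1 - x) + δ(ε₁)`, and since `e^ε₁ ≥ 1` this gives
`1 - (1 - γ) x' ≤ c (1 - (1 - γ) x)` with `c = e^ε₁ + (1 - γ) δ(ε₁) / γ`, i.e.
`φ' x ≤ c^(η + 1) φ' x'`. Writing `e^ε = e^ε̂ c^(η + 1)`, the mean value theorem bounds
`A(y) - e^ε A'(y)` by `m · max (Q(y) - e^ε̂ Q'(y)) 0`; summing over `y` gives `m δ(ε̂)`.
-/

open Topology

lemma prod_range_add_div_eq_ringChoose (η : ℝ) (n : ℕ) :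
    ∏ i ∈ range n, ((i + η) / (i + 1)) = Ring.choose (η + n - 1) n := by
  have h := Ring.factorial_nsmul_multichoose_eq_ascPochhammer η n
  rw [Polynomial.ascPochhammer_smeval_eq_eval, nsmul_eq_mul, Ring.multichoose_eq] at h
  rw [eq_div_of_mul_eq (by positivity) ((mul_comm _ _).trans h)]
  clear h
  induction n with
  | zero => simp
  | succ n ih =>
    rw [prod_range_succ, ih, ascPochhammer_succ_eval, Nat.factorial_succ]
    push_cast
    field_simp
    ring

lemma hasSum_ringChoose_mul_pow (a : ℝ) {t : ℝ} (ht : |t| < 1) :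
    HasSum (fun n : ℕ => Ring.choose (a + n - 1) n * t ^ n) ((1 - t) ^ (-a)) := by
  have := (Real.one_div_one_sub_rpow_hasFPowerSeriesOnBall_zero a).hasSum (y := t)
    (by simpa [enorm_eq_nnnorm, ← NNReal.coe_lt_coe] using ht)
  simpa [FormalMultilinearSeries.ofScalars_apply_eq, mul_comm,
    Real.rpow_neg (sub_nonneg.2 (abs_lt.1 ht).2.le)] using this

section NegBin

variable {η γ : ℝ}

lemma hasSum_negBinPMF_mul_pow (hη : η ≠ 0) {t : ℝ} (ht : |(1 - γ) * t| < 1) :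
    HasSum (fun k => negBinPMF η γ k * t ^ k)
      (((1 - (1 - γ) * t) ^ (-η) - 1) / (γ ^ (-η) - 1)) := by
  refine (((hasSum_ringChoose_mul_pow η ht).sub (hasSum_ite_eq 0 1)).div_const _).congr_fun ?_
  rintro (_ | k)
  · simp [negBinPMF]
  · simp only [negBinPMF, hη, prod_range_add_div_eq_ringChoose, if_false, Nat.add_one_ne_zero,
      mul_pow]
    ring

lemma hasSum_negBinPMF_zero_mul_pow {t : ℝ} (ht : |(1 - γ) * t| < 1) :
    HasSum (fun k => negBinPMF 0 γ k * t ^ k) (Real.log (1 - (1 - γ) * t) / Real.log γ) := by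
  refine (hasSum_nat_add_iff' 1).mp ?_
  have h := (Real.hasSum_pow_div_log_of_abs_lt_one ht).div_const (-Real.log γ)
  rw [neg_div_neg_eq] at h
  rw [sum_range_one, negBinPMF, if_pos rfl, zero_mul, sub_zero]
  refine h.congr_fun fun k => ?_
  simp only [negBinPMF, Nat.add_one_ne_zero, if_false, if_true, one_div, Real.log_inv]
  push_cast
  rw [mul_pow, div_div, div_mul_eq_mul_div, mul_neg, ← neg_mul]

lemma negBinMean_nonneg (hγ : γ ∈ Set.Ioo 0 1) : 0 ≤ negBinMean η γ := by
  obtain ⟨hγ0, hγ1⟩ := hγ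
  unfold negBinMean
  split_ifs with hη
  · have h : 1 ≤ 1 / γ := by rw [one_div]; exact (one_le_inv₀ hγ0).2 hγ1.le
    exact div_nonneg (sub_nonneg.2 h) (Real.log_nonneg h)
  rcases Ne.lt_or_gt hη with h | h
  · have := Real.one_lt_rpow_of_pos_of_lt_one_of_neg hγ0 hγ1 h
    exact div_nonneg_of_nonpos (mul_nonpos_of_nonpos_of_nonneg h.le (by linarith))
      (mul_nonpos_of_nonneg_of_nonpos hγ0.le (by linarith))
  · have := Real.rpow_lt_one hγ0.le hγ1 h
    exact div_nonneg (mul_nonneg h.le (by linarith)) (mul_nonneg hγ0.le (by linarith))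

noncomputable def negBinPGFDeriv (η γ x : ℝ) : ℝ :=
  negBinMean η γ * (γ / (1 - (1 - γ) * x)) ^ (η + 1)

lemma hasDerivAt_pgf_negBinPMF (hγ : 0 < γ) {t : ℝ} (ht : |(1 - γ) * t| < 1) :
    HasDerivAt (pgf (negBinPMF η γ)) (negBinPGFDeriv η γ t) t := by
  have hnear : ∀ᶠ x in 𝓝 t, |(1 - γ) * x| < 1 :=
    (continuous_const.mul continuous_id).abs.continuousAt.eventually_lt continuousAt_const ht
  have hv : 0 < 1 - (1 - γ) * t := by linarith [le_abs_self ((1 - γ) * t)]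
  have hlin : HasDerivAt (fun x => 1 - (1 - γ) * x) (-(1 - γ)) t := by
    simpa using ((hasDerivAt_id t).const_mul (1 - γ)).const_sub 1
  by_cases hη : η = 0
  · subst hη
    refine (((hlin.log hv.ne').div_const (Real.log γ)).congr_of_eventuallyEq
      (hnear.mono fun x hx => (hasSum_negBinPMF_zero_mul_pow hx).tsum_eq)).congr_deriv ?_
    simp only [negBinPGFDeriv, negBinMean, if_true, zero_add, Real.rpow_one, one_div,
      Real.log_inv]
    field_simp
  · refine ((((hlin.rpow_const (Or.inl hv.ne')).sub_const 1).div_const _).congr_of_eventuallyEq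
      (hnear.mono fun x hx => (hasSum_negBinPMF_mul_pow hη hx).tsum_eq)).congr_deriv ?_
    simp only [negBinPGFDeriv, negBinMean, hη, if_false]
    rw [Real.div_rpow hγ.le hv.le, Real.rpow_add_one hγ.ne', Real.rpow_neg hγ.le,
      Real.rpow_sub_one hv.ne', Real.rpow_neg hv.le, Real.rpow_add_one hv.ne']
    have := Real.rpow_pos_of_pos hγ η
    field_simp

lemma le_one_sub_mul (hγ : γ ≤ 1) {x : ℝ} (hx : x ≤ 1) : γ ≤ 1 - (1 - γ) * x := by
  nlinarith

lemma negBinPGFDeriv_nonneg (hγ : γ ∈ Set.Ioo 0 1) {x : ℝ} (hx : x ≤ 1) :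
    0 ≤ negBinPGFDeriv η γ x :=
  mul_nonneg (negBinMean_nonneg hγ)
    (Real.rpow_nonneg (div_nonneg hγ.1.le (hγ.1.le.trans (le_one_sub_mul hγ.2.le hx))) _)

lemma negBinPGFDeriv_le_negBinMean (hγ : γ ∈ Set.Ioo 0 1) (hη : -1 < η) {x : ℝ} (hx : x ≤ 1) :
    negBinPGFDeriv η γ x ≤ negBinMean η γ := by
  have hV := le_one_sub_mul hγ.2.le hx
  refine mul_le_of_le_one_right (negBinMean_nonneg hγ) (Real.rpow_le_one ?_ ?_ (by linarith))
  · exact div_nonneg hγ.1.le (hγ.1.le.trans hV)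
  · exact div_le_one_of_le₀ hV (hγ.1.le.trans hV)

lemma negBinPGFDeriv_le_mul (hγ : γ ∈ Set.Ioo 0 1) (hη : -1 < η) {x x' c : ℝ} (hx : x ≤ 1)
    (hx' : x' ≤ 1) (h : 1 - (1 - γ) * x' ≤ c * (1 - (1 - γ) * x)) :
    negBinPGFDeriv η γ x ≤ c ^ (η + 1) * negBinPGFDeriv η γ x' := by
  have hV := hγ.1.trans_le (le_one_sub_mul hγ.2.le hx)
  have hV' := hγ.1.trans_le (le_one_sub_mul hγ.2.le hx')
  have hc : 0 < c := pos_of_mul_pos_left (hV'.trans_le h) hV.le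
  unfold negBinPGFDeriv
  rw [mul_left_comm, ← Real.mul_rpow hc.le (div_nonneg hγ.1.le hV'.le)]
  refine mul_le_mul_of_nonneg_left (Real.rpow_le_rpow (div_nonneg hγ.1.le hV.le) ?_
    (by linarith)) (negBinMean_nonneg hγ)
  rw [mul_div_assoc', div_le_div_iff₀ hV hV']
  nlinarith [hγ.1]

lemma one_sub_mul_le_mul_one_sub_mul (hγ : γ ∈ Set.Ioo 0 1) {b d x x' : ℝ} (hb : 1 ≤ b)
    (hd : 0 ≤ d) (hx : x ≤ 1) (h : 1 - x' ≤ b * (1 - x) + d) :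
    1 - (1 - γ) * x' ≤ (b + (1 - γ) / γ * d) * (1 - (1 - γ) * x) := by
  obtain ⟨hγ0, hγ1⟩ := hγ
  have hD : γ * ((1 - γ) / γ * d) = (1 - γ) * d := by field_simp
  have hD0 : 0 ≤ (1 - γ) / γ * d := by have := sub_pos.2 hγ1; positivity
  nlinarith [mul_nonneg hD0 (mul_nonneg (sub_pos.2 hγ1).le (sub_nonneg.2 hx)),
    mul_le_mul_of_nonneg_left h (sub_pos.2 hγ1).le]

end NegBin

lemma sub_sub_mul_sub_le_of_hasDerivAt {φ φ' : ℝ → ℝ} {a q a' q' lam κ M : ℝ}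
    (hφ : ∀ s ∈ Set.Icc (0 : ℝ) 1, HasDerivAt φ (φ' (a + s * q)) (a + s * q))
    (hφ' : ∀ s ∈ Set.Icc (0 : ℝ) 1, HasDerivAt φ (φ' (a' + s * q')) (a' + s * q'))
    (h_nonneg : ∀ s ∈ Set.Icc (0 : ℝ) 1, 0 ≤ φ' (a + s * q))
    (h_le : ∀ s ∈ Set.Icc (0 : ℝ) 1, φ' (a + s * q) ≤ M)
    (h_ratio : ∀ s ∈ Set.Icc (0 : ℝ) 1, φ' (a + s * q) ≤ κ * φ' (a' + s * q'))
    (hq' : 0 ≤ q') (hlam : 0 ≤ lam) :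
    φ (a + q) - φ a - lam * κ * (φ (a' + q') - φ a') ≤ M * max (q - lam * q') 0 := by
  set H : ℝ → ℝ := fun s => φ (a + s * q) - lam * κ * φ (a' + s * q')
  have hH : ∀ s ∈ Set.Icc (0 : ℝ) 1,
      HasDerivAt H (φ' (a + s * q) * q - lam * κ * (φ' (a' + s * q') * q')) s := by
    intro s hs
    have hpath : ∀ c d : ℝ, HasDerivAt (fun s : ℝ => c + s * d) d s := fun c d => by
      simpa using ((hasDerivAt_id s).mul_const d).const_add c
    exact ((hφ s hs).comp s (hpath a q)).sub (((hφ' s hs).comp s (hpath a' q')).const_mul _)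
  have hH' : ∀ s ∈ Set.Icc (0 : ℝ) 1,
      φ' (a + s * q) * q - lam * κ * (φ' (a' + s * q') * q') ≤ M * max (q - lam * q') 0 := by
    intro s hs
    have hmix : lam * (φ' (a + s * q) * q') ≤ lam * (κ * φ' (a' + s * q') * q') := by
      gcongr
      exact h_ratio s hs
    rcases le_total 0 (q - lam * q') with hpos | hneg
    · calc _ ≤ φ' (a + s * q) * (q - lam * q') := by linarith
        _ ≤ M * (q - lam * q') := mul_le_mul_of_nonneg_right (h_le s hs) hpos
        _ = M * max (q - lam * q') 0 := by rw [max_eq_left hpos]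
    · calc _ ≤ φ' (a + s * q) * (q - lam * q') := by linarith
        _ ≤ 0 := mul_nonpos_of_nonneg_of_nonpos (h_nonneg s hs) hneg
        _ = M * max (q - lam * q') 0 := by rw [max_eq_right hneg, mul_zero]
  have hmvt := (convex_Icc (0 : ℝ) 1).image_sub_le_mul_sub_of_deriv_le
    (fun s hs => (hH s hs).continuousAt.continuousWithinAt)
    (fun s hs => (hH s (interior_subset hs)).differentiableAt.differentiableWithinAt)
    (fun s hs => (hH s (interior_subset hs)).deriv ▸ hH' s (interior_subset hs))
    0 ⟨le_rfl, zero_le_one⟩ 1 ⟨zero_le_one, le_rfl⟩ zero_le_one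
  simp only [H, zero_mul, add_zero, one_mul, sub_zero, mul_one] at hmvt
  linarith

lemma sum_mul_le_mul_sum_add_sum_max {ι : Type*} (s : Finset ι) {w P P' : ι → ℝ} (c : ℝ)
    (hw : ∀ i ∈ s, w i ∈ Set.Icc 0 1) :
    ∑ i ∈ s, w i * P' i ≤ c * ∑ i ∈ s, w i * P i + ∑ i ∈ s, max (P' i - c * P i) 0 := by
  rw [mul_sum, ← sum_add_distrib]
  refine sum_le_sum fun i hi => ?_
  obtain ⟨hw0, hw1⟩ := hw i hi
  calc w i * P' i = c * (w i * P i) + w i * (P' i - c * P i) := by ring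
    _ ≤ c * (w i * P i) + w i * max (P' i - c * P i) 0 := by gcongr; exact le_max_left _ _
    _ ≤ c * (w i * P i) + max (P' i - c * P i) 0 := by
        gcongr; exact mul_le_of_le_one_left (le_max_right _ _) hw1

section CumulativeMass

variable {Y : Type*} [LinearOrder Y]

def belowWeight (y : Y) (s : ℝ) (z : Y) : ℝ := if z < y then 1 else if z = y then s else 0

lemma belowWeight_mem_Icc (y z : Y) {s : ℝ} (hs : s ∈ Set.Icc (0 : ℝ) 1) :
    belowWeight y s z ∈ Set.Icc (0 : ℝ) 1 := by
  unfold belowWeight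
  split_ifs
  exacts [⟨zero_le_one, le_rfl⟩, hs, ⟨le_rfl, zero_le_one⟩]

variable [Fintype Y]

lemma cumLE_eq_cumLT_add (Q : Y → ℝ) (y : Y) : cumLE Q y = cumLT Q y + Q y := by
  have h : univ.filter (· ≤ y) = insert y (univ.filter (· < y)) := by
    ext z
    simp [le_iff_lt_or_eq, or_comm]
  rw [cumLE, h, sum_insert (by simp), cumLT, add_comm]

lemma cumLT_add_mul_eq_sum (Q : Y → ℝ) (y : Y) (s : ℝ) :
    cumLT Q y + s * Q y = ∑ z, belowWeight y s z * Q z := by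
  have h := sum_ite_eq' univ y (fun z => s * Q z)
  rw [if_pos (mem_univ y)] at h
  rw [cumLT, sum_filter, ← h, ← sum_add_distrib]
  refine sum_congr rfl fun z _ => ?_
  rcases lt_trichotomy z y with hzy | rfl | hzy
  · simp [belowWeight, hzy, hzy.ne]
  · simp [belowWeight]
  · simp [belowWeight, hzy.ne', not_lt.2 hzy.le]

lemma cumLT_add_mul_mem_Icc {Q : Y → ℝ} (hQ : ∀ z, 0 ≤ Q z) (hQ_sum : ∑ z, Q z = 1) (y : Y)
    ⦃s : ℝ⦄ (hs : s ∈ Set.Icc (0 : ℝ) 1) : cumLT Q y + s * Q y ∈ Set.Icc (0 : ℝ) 1 := by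
  rw [cumLT_add_mul_eq_sum]
  refine ⟨sum_nonneg fun z _ => mul_nonneg (belowWeight_mem_Icc y z hs).1 (hQ z), ?_⟩
  exact (sum_le_sum fun z _ =>
    mul_le_of_le_one_left (hQ z) (belowWeight_mem_Icc y z hs).2).trans_eq hQ_sum

lemma one_sub_cumLT_add_mul_le {Q Q' : Y → ℝ} (hQ_sum : ∑ z, Q z = 1) (hQ'_sum : ∑ z, Q' z = 1)
    (y : Y) {s : ℝ} (hs : s ∈ Set.Icc (0 : ℝ) 1) (b : ℝ) :
    1 - (cumLT Q' y + s * Q' y)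
      ≤ b * (1 - (cumLT Q y + s * Q y)) + ∑ z, max (Q' z - b * Q z) 0 := by
  have htail : ∀ P : Y → ℝ, ∑ z, P z = 1 →
      1 - (cumLT P y + s * P y) = ∑ z, (1 - belowWeight y s z) * P z := by
    intro P hP
    simp only [cumLT_add_mul_eq_sum, sub_mul, one_mul, sum_sub_distrib, hP]
  rw [htail Q hQ_sum, htail Q' hQ'_sum]
  refine sum_mul_le_mul_sum_add_sum_max _ b fun z _ => ?_
  obtain ⟨h0, h1⟩ := belowWeight_mem_Icc y z hs
  exact ⟨sub_nonneg.2 h1, sub_le_self _ h0⟩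

end CumulativeMass

lemma pgf_negBinPMF_sub_le {Y : Type*} [Fintype Y] [LinearOrder Y] {Q Q' : Y → ℝ}
    (hQ : ∀ z, 0 ≤ Q z) (hQ' : ∀ z, 0 ≤ Q' z) (hQ_sum : ∑ z, Q z = 1) (hQ'_sum : ∑ z, Q' z = 1)
    {γ η : ℝ} (hγ : γ ∈ Set.Ioo (0 : ℝ) 1) (hη : -1 < η) {b d lam : ℝ} (hb : 1 ≤ b)
    (hd : ∑ z, max (Q' z - b * Q z) 0 ≤ d) (hlam : 0 ≤ lam) (y : Y) :
    pgf (negBinPMF η γ) (cumLE Q y) - pgf (negBinPMF η γ) (cumLT Q y)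
        - lam * (b + (1 - γ) / γ * d) ^ (η + 1)
          * (pgf (negBinPMF η γ) (cumLE Q' y) - pgf (negBinPMF η γ) (cumLT Q' y))
      ≤ negBinMean η γ * max (Q y - lam * Q' y) 0 := by
  have hd0 : 0 ≤ d := (sum_nonneg fun z _ => le_max_right _ _).trans hd
  have hderiv : ∀ x ∈ Set.Icc (0 : ℝ) 1,
      HasDerivAt (pgf (negBinPMF η γ)) (negBinPGFDeriv η γ x) x := fun x hx => by
    refine hasDerivAt_pgf_negBinPMF hγ.1 ?_
    rw [abs_of_nonneg (mul_nonneg (sub_pos.2 hγ.2).le hx.1)]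
    linarith [mul_le_of_le_one_right (sub_pos.2 hγ.2).le hx.2, hγ.1]
  have hpath := cumLT_add_mul_mem_Icc hQ hQ_sum y
  have hpath' := cumLT_add_mul_mem_Icc hQ' hQ'_sum y
  rw [cumLE_eq_cumLT_add Q y, cumLE_eq_cumLT_add Q' y]
  refine sub_sub_mul_sub_le_of_hasDerivAt (fun s hs => hderiv _ (hpath hs))
    (fun s hs => hderiv _ (hpath' hs)) (fun s hs => negBinPGFDeriv_nonneg hγ (hpath hs).2)
    (fun s hs => negBinPGFDeriv_le_negBinMean hγ hη (hpath hs).2)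
    (fun s hs => negBinPGFDeriv_le_mul hγ hη (hpath hs).2 (hpath' hs).2 ?_) (hQ' y) hlam
  refine one_sub_mul_le_mul_one_sub_mul hγ hb hd0 (hpath hs).2 ?_
  linarith [one_sub_cumLT_add_mul_le hQ_sum hQ'_sum y hs b]

theorem private_selection_negbin_bound_general
    {Y : Type*} [Fintype Y] [LinearOrder Y]
    (Q Q' : Y → ℝ)
    (hQ_pos : ∀ y, 0 < Q y) (hQ_sum : ∑ y, Q y = 1)
    (hQ'_pos : ∀ y, 0 < Q' y) (hQ'_sum : ∑ y, Q' y = 1)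
    (γ η : ℝ) (hγ : γ ∈ Set.Ioo (0 : ℝ) 1) (hη : -1 < η)
    (m : ℝ) (hm : m = negBinMean η γ)
    (A A' : Y → ℝ)
    (hA : ∀ y, A y = pgf (negBinPMF η γ) (cumLE Q y) - pgf (negBinPMF η γ) (cumLT Q y))
    (hA' : ∀ y, A' y = pgf (negBinPMF η γ) (cumLE Q' y) - pgf (negBinPMF η γ) (cumLT Q' y))
    (δ : ℝ → ℝ)
    (hδ : ∀ s, ∑ y, max (Q y - Real.exp s * Q' y) 0 ≤ δ s)
    (hδ' : ∀ s, ∑ y, max (Q' y - Real.exp s * Q y) 0 ≤ δ s)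
    (ε ε₁ : ℝ) (hε₁ : 0 ≤ ε₁) :
    ∑ y, max (A y - Real.exp ε * A' y) 0
      ≤ m * δ (ε - (η + 1) * Real.log (Real.exp ε₁ + ((1 - γ) / γ) * δ ε₁)) := by
  set c := Real.exp ε₁ + (1 - γ) / γ * δ ε₁
  set ε' := ε - (η + 1) * Real.log c with hε'
  have hδ₁ : 0 ≤ δ ε₁ := (sum_nonneg fun y _ => le_max_right _ _).trans (hδ' ε₁)
  have hc : 0 < c := add_pos_of_pos_of_nonneg (Real.exp_pos _)
    (mul_nonneg (div_nonneg (sub_pos.2 hγ.2).le hγ.1.le) hδ₁)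
  have hexp : Real.exp ε = Real.exp ε' * c ^ (η + 1) := by
    rw [Real.rpow_def_of_pos hc, ← Real.exp_add, hε']
    ring_nf
  have hm0 : 0 ≤ m := hm ▸ negBinMean_nonneg hγ
  calc ∑ y, max (A y - Real.exp ε * A' y) 0
      ≤ ∑ y, m * max (Q y - Real.exp ε' * Q' y) 0 := by
        refine sum_le_sum fun y _ => max_le ?_ (mul_nonneg hm0 (le_max_right _ _))
        rw [hA, hA', hexp, hm]
        exact pgf_negBinPMF_sub_le (fun z => (hQ_pos z).le) (fun z => (hQ'_pos z).le) hQ_sum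
          hQ'_sum hγ hη (Real.one_le_exp hε₁) (hδ' ε₁) (Real.exp_nonneg _) y
    _ = m * ∑ y, max (Q y - Real.exp ε' * Q' y) 0 := (mul_sum _ _ _).symm
    _ ≤ m * δ ε' := mul_le_mul_of_nonneg_left (hδ ε') hm0

/-- Theorem 5.2: hockey-stick privacy-profile bound for private selection with a
truncated negative binomial number of candidates. -/
theorem private_selection_negbin_bound
    {Y : Type*} [Fintype Y] [LinearOrder Y]
    (Q Q' : Y → ℝ)
    (hQ_pos : ∀ y, 0 < Q y) (hQ_le : ∀ y, Q y ≤ 1) (hQ_sum : ∑ y, Q y = 1)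
    (hQ'_pos : ∀ y, 0 < Q' y) (hQ'_le : ∀ y, Q' y ≤ 1) (hQ'_sum : ∑ y, Q' y = 1)
    (γ η : ℝ) (hγ : γ ∈ Set.Ioo (0 : ℝ) 1) (hη : -1 < η)
    (m : ℝ) (hm : m = negBinMean η γ)
    (A A' : Y → ℝ)
    (hA : ∀ y, A y = pgf (negBinPMF η γ) (cumLE Q y) - pgf (negBinPMF η γ) (cumLT Q y))
    (hA' : ∀ y, A' y = pgf (negBinPMF η γ) (cumLE Q' y) - pgf (negBinPMF η γ) (cumLT Q' y))
    (δ : ℝ → ℝ) (hδ_nonneg : ∀ s, 0 ≤ δ s)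
    (hδ : ∀ s, ∑ y, max (Q y - Real.exp s * Q' y) 0 ≤ δ s)
    (hδ' : ∀ s, ∑ y, max (Q' y - Real.exp s * Q y) 0 ≤ δ s)
    (ε ε₁ : ℝ) (hε₁ : 0 ≤ ε₁) :
    ∑ y, max (A y - Real.exp ε * A' y) 0
      ≤ m * δ (ε - (η + 1) * Real.log (Real.exp ε₁ + ((1 - γ) / γ) * δ ε₁)) :=
  private_selection_negbin_bound_general Q Q' hQ_pos hQ_sum hQ'_pos hQ'_sum γ η hγ hη m hm A A' hA
    hA' δ hδ hδ' ε ε₁ hε₁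
end
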